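/- arXiv:1712.07568 — 2 statements merged into one kernel-verified Lean document; each statement's English description precedes it below -/
import Mathlib

section
/- Let p ∈ (0,1), α₁, α₂ ∈ ℝ, and c ∈ (0,1). Define λ(c) = A/(1+A) where A = (p/(1−p))·exp(α₁c + (α₂/2)c²), and define φ''(c) = α₁ + α₂c − 1/(c(1−c)). Suppose λ(c) = c. Then λ'(c) = c(1−c)(α₁ + α₂c), and consequently: φ''(c) > 0 ⟺ λ'(c) > 1, φ''(c) < 0 ⟺ λ'(c) < 1, and φ''(c) = 0 ⟺ λ'(c) = 1. -/
open Real Set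

/-! Since `A' = A (α₁ + α₂ c)`, the map `λ = A / (1 + A)` satisfies the logistic identity
`λ' = λ (1 - λ) (α₁ + α₂ c)`, which at a fixed point reads `λ'(c) = c (1 - c) (α₁ + α₂ c)`.
As `c (1 - c) > 0`, `φ''(c) = (λ'(c) - 1) / (c (1 - c))` has the sign of `λ'(c) - 1`. -/

theorem HasDerivAt.div_one_add_self {𝕜 : Type*} [NontriviallyNormedField 𝕜] {f : 𝕜 → 𝕜}
    {x g' : 𝕜} (hf : HasDerivAt f (f x * g') x) (hx : 1 + f x ≠ 0) :
    HasDerivAt (fun y => f y / (1 + f y))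
      (f x / (1 + f x) * (1 - f x / (1 + f x)) * g') x := by
  refine (hf.div ((hasDerivAt_const x 1).add hf) hx).congr_deriv ?_
  simp only [Pi.add_apply, zero_add]
  field_simp

theorem hasDerivAt_linear_add_half_sq (a b x : ℝ) :
    HasDerivAt (fun y => a * y + b / 2 * y ^ 2) (a + b * x) x := by
  refine (((hasDerivAt_id x).const_mul a).add
    ((hasDerivAt_pow 2 x).const_mul (b / 2))).congr_deriv ?_
  simp only [Nat.cast_ofNat]
  ring

theorem stmt_4_general (p α₁ α₂ : ℝ)
    (A lam : ℝ → ℝ)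
    (hA : ∀ c, A c = p / (1 - p) * Real.exp (α₁ * c + α₂ / 2 * c ^ 2))
    (hlam : ∀ c, lam c = A c / (1 + A c))
    (c : ℝ) (hc : c ∈ Ioo (0 : ℝ) 1) (hfix : lam c = c) :
    HasDerivAt lam (c * (1 - c) * (α₁ + α₂ * c)) c ∧
    (α₁ + α₂ * c - 1 / (c * (1 - c)) > 0 ↔ c * (1 - c) * (α₁ + α₂ * c) > 1) ∧
    (α₁ + α₂ * c - 1 / (c * (1 - c)) < 0 ↔ c * (1 - c) * (α₁ + α₂ * c) < 1) ∧
    (α₁ + α₂ * c - 1 / (c * (1 - c)) = 0 ↔ c * (1 - c) * (α₁ + α₂ * c) = 1) := by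
  obtain ⟨hc0, hc1⟩ := hc
  have hden : 1 + A c ≠ 0 := by
    intro h
    rw [hlam, h, div_zero] at hfix
    exact hc0.ne hfix
  have hA_deriv : HasDerivAt A (A c * (α₁ + α₂ * c)) c := by
    rw [funext hA, mul_assoc]
    exact ((hasDerivAt_linear_add_half_sq α₁ α₂ c).exp).const_mul _
  have hlam_deriv := hA_deriv.div_one_add_self hden
  rw [← funext hlam, ← hlam c, hfix] at hlam_deriv
  have ht : 0 < c * (1 - c) := mul_pos hc0 (sub_pos.2 hc1)
  rw [sub_div' ht.ne', mul_comm _ (c * (1 - c))]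
  refine ⟨hlam_deriv, ?_, ?_, ?_⟩
  · rw [gt_iff_lt, gt_iff_lt, lt_div_iff₀ ht, zero_mul, sub_pos]
  · rw [div_lt_iff₀ ht, zero_mul, sub_neg]
  · rw [div_eq_zero_iff, or_iff_left ht.ne', sub_eq_zero]

theorem stmt_4 (p α₁ α₂ : ℝ) (hp : p ∈ Ioo (0 : ℝ) 1)
    (A lam : ℝ → ℝ)
    (hA : ∀ c, A c = p / (1 - p) * Real.exp (α₁ * c + α₂ / 2 * c ^ 2))
    (hlam : ∀ c, lam c = A c / (1 + A c))
    (c : ℝ) (hc : c ∈ Ioo (0 : ℝ) 1) (hfix : lam c = c) :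
    HasDerivAt lam (c * (1 - c) * (α₁ + α₂ * c)) c ∧
    (α₁ + α₂ * c - 1 / (c * (1 - c)) > 0 ↔ c * (1 - c) * (α₁ + α₂ * c) > 1) ∧
    (α₁ + α₂ * c - 1 / (c * (1 - c)) < 0 ↔ c * (1 - c) * (α₁ + α₂ * c) < 1) ∧
    (α₁ + α₂ * c - 1 / (c * (1 - c)) = 0 ↔ c * (1 - c) * (α₁ + α₂ * c) = 1) :=
  stmt_4_general p α₁ α₂ A lam hA hlam c hc hfix
end

section
/- Let α₂ ∈ ℝ and c̄ ∈ (0,1) satisfy α₂ = (2c̄−1)/(c̄²(1−c̄)²). Define n(c) = 1/(1−c) − log(c/(1−c)) + ((1−2c̄)/(2c̄²(1−c̄)²))·c² for c ∈ (0,1). Then n'(c) = c·((1−2c̄)/(c̄²(1−c̄)²) − (1−2c)/(c²(1−c)²)); hence n is strictly decreasing on (0, c̄), strictly increasing on (c̄, 1), and attains its global minimum over (0,1) at c̄, with n(c̄) = 1/(1−c̄) − log(c̄/(1−c̄)) + (1−2c̄)/(2(1−c̄)²). -/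
/-!
With `F x = (1 - 2x) / (x² (1 - x)²)` one computes `n' c = c (F c̄ - F c)`. The difference
`F b - F c` factors as `(c - b) Q(b, c) / (b² (1 - b)² c² (1 - c)²)` with a polynomial `Q`
that is positive on the open unit square, so `F` is strictly decreasing on `(0, 1)` and `n'`
changes sign from negative to positive exactly at `c̄`.
-/

open Real Set

lemma inflection_factor_pos {b c : ℝ} (hb0 : 0 < b) (hb1 : b < 1) (hc0 : 0 < c) (hc1 : c < 1) :
    0 < b * (1 - b) ^ 2 + c * (1 - c) ^ 2 - 4 * b * c + 5 * b * c * (b + c)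
      - 2 * b * c * (b ^ 2 + c ^ 2) - 2 * b ^ 2 * c ^ 2 := by
  have hbc := mul_pos hb0 hc0
  nlinarith [sq_nonneg (b - c), mul_nonneg hbc.le (sq_nonneg (b + c - 1)),
    mul_pos hbc (mul_pos (sub_pos.2 hb1) (sub_pos.2 hc1)), mul_pos hb0 (sub_pos.2 hb1),
    mul_pos hc0 (sub_pos.2 hc1), mul_nonneg hbc.le (sq_nonneg (b - c))]

lemma strictAntiOn_inflection_slope :
    StrictAntiOn (fun x : ℝ => (1 - 2 * x) / (x ^ 2 * (1 - x) ^ 2)) (Ioo 0 1) := by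
  rintro b ⟨hb0, hb1⟩ c ⟨hc0, hc1⟩ hbc
  have hb : (1 : ℝ) - b ≠ 0 := (sub_pos.2 hb1).ne'
  have hc : (1 : ℝ) - c ≠ 0 := (sub_pos.2 hc1).ne'
  have hdiff : (1 - 2 * b) / (b ^ 2 * (1 - b) ^ 2) - (1 - 2 * c) / (c ^ 2 * (1 - c) ^ 2)
      = (c - b) * (b * (1 - b) ^ 2 + c * (1 - c) ^ 2 - 4 * b * c + 5 * b * c * (b + c)
          - 2 * b * c * (b ^ 2 + c ^ 2) - 2 * b ^ 2 * c ^ 2)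
        / (b ^ 2 * (1 - b) ^ 2 * (c ^ 2 * (1 - c) ^ 2)) := by
    field_simp
    ring
  have hpos : 0 < (1 - 2 * b) / (b ^ 2 * (1 - b) ^ 2) - (1 - 2 * c) / (c ^ 2 * (1 - c) ^ 2) := by
    rw [hdiff]
    exact div_pos (mul_pos (sub_pos.2 hbc) (inflection_factor_pos hb0 hb1 hc0 hc1)) (by positivity)
  exact sub_pos.1 hpos

lemma hasDerivAt_inv_one_sub_sub_log_add_mul_sq (K : ℝ) {c : ℝ} (hc : c ∈ Ioo (0 : ℝ) 1) :
    HasDerivAt (fun x => 1 / (1 - x) - log (x / (1 - x)) + K * x ^ 2)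
      (c * (2 * K - (1 - 2 * c) / (c ^ 2 * (1 - c) ^ 2))) c := by
  obtain ⟨hc0, hc1⟩ := hc
  have h1c : (1 : ℝ) - c ≠ 0 := (sub_pos.2 hc1).ne'
  have hsub : HasDerivAt (fun x : ℝ => 1 - x) (-1) c := by
    simpa using (hasDerivAt_id c).const_sub 1
  have hinv := (hasDerivAt_const c (1 : ℝ)).fun_div hsub h1c
  have hlog := ((hasDerivAt_id' c).fun_div hsub h1c).log (div_pos hc0 (sub_pos.2 hc1)).ne'
  refine ((hinv.sub hlog).add ((hasDerivAt_pow 2 c).const_mul K)).congr_deriv ?_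
  field_simp
  ring

section SignChange

variable {b : ℝ} {f : ℝ → ℝ}
  (hf : ∀ c ∈ Ioo (0 : ℝ) 1, HasDerivAt f
    (c * ((1 - 2 * b) / (b ^ 2 * (1 - b) ^ 2) - (1 - 2 * c) / (c ^ 2 * (1 - c) ^ 2))) c)
include hf

lemma strictAntiOn_Ioc_of_hasDerivAt_inflection (hb : b < 1) : StrictAntiOn f (Ioc 0 b) := by
  have hsub : Ioc 0 b ⊆ Ioo 0 1 := fun x hx => ⟨hx.1, hx.2.trans_lt hb⟩
  refine strictAntiOn_of_hasDerivWithinAt_neg (convex_Ioc 0 b)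
    (fun x hx => (hf x (hsub hx)).continuousAt.continuousWithinAt)
    (fun x hx => (hf x (hsub (interior_subset hx))).hasDerivWithinAt) fun x hx => ?_
  rw [interior_Ioc] at hx
  exact mul_neg_of_pos_of_neg hx.1 <| sub_neg.2 <|
    strictAntiOn_inflection_slope ⟨hx.1, hx.2.trans hb⟩ ⟨hx.1.trans hx.2, hb⟩ hx.2

lemma strictMonoOn_Ico_of_hasDerivAt_inflection (hb : 0 < b) : StrictMonoOn f (Ico b 1) := by
  have hsub : Ico b 1 ⊆ Ioo 0 1 := fun x hx => ⟨hb.trans_le hx.1, hx.2⟩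
  refine strictMonoOn_of_hasDerivWithinAt_pos (convex_Ico b 1)
    (fun x hx => (hf x (hsub hx)).continuousAt.continuousWithinAt)
    (fun x hx => (hf x (hsub (interior_subset hx))).hasDerivWithinAt) fun x hx => ?_
  rw [interior_Ico] at hx
  have hx0 := hb.trans hx.1
  exact mul_pos hx0 <| sub_pos.2 <|
    strictAntiOn_inflection_slope ⟨hb, hx.1.trans hx.2⟩ ⟨hx0, hx.2⟩ hx.1

end SignChange

theorem stmt_13_general (cbar : ℝ) (hcbar : cbar ∈ Ioo (0 : ℝ) 1)
    (nfun : ℝ → ℝ)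
    (hn : ∀ c, nfun c = 1 / (1 - c) - Real.log (c / (1 - c)) +
      (1 - 2 * cbar) / (2 * cbar ^ 2 * (1 - cbar) ^ 2) * c ^ 2) :
    (∀ c ∈ Ioo (0 : ℝ) 1, HasDerivAt nfun
      (c * ((1 - 2 * cbar) / (cbar ^ 2 * (1 - cbar) ^ 2) -
        (1 - 2 * c) / (c ^ 2 * (1 - c) ^ 2))) c) ∧
    StrictAntiOn nfun (Ioc (0 : ℝ) cbar) ∧
    StrictMonoOn nfun (Ico cbar (1 : ℝ)) ∧
    (∀ c ∈ Ioo (0 : ℝ) 1, nfun cbar ≤ nfun c) ∧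
    nfun cbar = 1 / (1 - cbar) - Real.log (cbar / (1 - cbar)) +
      (1 - 2 * cbar) / (2 * (1 - cbar) ^ 2) := by
  obtain ⟨hb0, hb1⟩ := hcbar
  have hderiv : ∀ c ∈ Ioo (0 : ℝ) 1, HasDerivAt nfun
      (c * ((1 - 2 * cbar) / (cbar ^ 2 * (1 - cbar) ^ 2) -
        (1 - 2 * c) / (c ^ 2 * (1 - c) ^ 2))) c := fun c hc => by
    rw [funext hn]
    convert hasDerivAt_inv_one_sub_sub_log_add_mul_sq
      ((1 - 2 * cbar) / (2 * cbar ^ 2 * (1 - cbar) ^ 2)) hc using 3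
    rw [mul_div_assoc', mul_assoc, mul_div_mul_left _ _ two_ne_zero]
  have hanti := strictAntiOn_Ioc_of_hasDerivAt_inflection hderiv hb1
  have hmono := strictMonoOn_Ico_of_hasDerivAt_inflection hderiv hb0
  refine ⟨hderiv, hanti, hmono, fun c hc => ?_, ?_⟩
  · rcases le_total c cbar with h | h
    · exact hanti.antitoneOn ⟨hc.1, h⟩ ⟨hb0, le_rfl⟩ h
    · exact hmono.monotoneOn ⟨le_rfl, hb1⟩ ⟨h, hc.2⟩ h
  · have : cbar ≠ 0 := hb0.ne'
    rw [hn]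
    field_simp

theorem stmt_13 (α₂ cbar : ℝ) (hcbar : cbar ∈ Ioo (0 : ℝ) 1)
    (hα₂ : α₂ = (2 * cbar - 1) / (cbar ^ 2 * (1 - cbar) ^ 2))
    (nfun : ℝ → ℝ)
    (hn : ∀ c, nfun c = 1 / (1 - c) - Real.log (c / (1 - c)) +
      (1 - 2 * cbar) / (2 * cbar ^ 2 * (1 - cbar) ^ 2) * c ^ 2) :
    (∀ c ∈ Ioo (0 : ℝ) 1, HasDerivAt nfun
      (c * ((1 - 2 * cbar) / (cbar ^ 2 * (1 - cbar) ^ 2) -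
        (1 - 2 * c) / (c ^ 2 * (1 - c) ^ 2))) c) ∧
    StrictAntiOn nfun (Ioc (0 : ℝ) cbar) ∧
    StrictMonoOn nfun (Ico cbar (1 : ℝ)) ∧
    (∀ c ∈ Ioo (0 : ℝ) 1, nfun cbar ≤ nfun c) ∧
    nfun cbar = 1 / (1 - cbar) - Real.log (cbar / (1 - cbar)) +
      (1 - 2 * cbar) / (2 * (1 - cbar) ^ 2) :=
  stmt_13_general cbar hcbar nfun hn
end
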